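/- arXiv:2006.08293 — 2 statements merged into one kernel-verified Lean document; each statement's English description precedes it below -/
import Mathlib

section
/- Let G(x,y,t) = ((x²+y²)² + 16t²)^{-1/2} and let Δ♭ = X² + Y² be the Kohn Laplacian, where X = ∂_x - (y/2)∂_t and Y = ∂_y + (x/2)∂_t. Then Δ♭G(p) = 0 for every p ∈ ℝ³ with p ≠ 0. -/
noncomputable section

def pdx (f : ℝ × ℝ × ℝ → ℝ) (p : ℝ × ℝ × ℝ) : ℝ :=
  deriv (fun s => f (s, p.2.1, p.2.2)) p.1

def pdy (f : ℝ × ℝ × ℝ → ℝ) (p : ℝ × ℝ × ℝ) : ℝ :=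
  deriv (fun s => f (p.1, s, p.2.2)) p.2.1

def pdt (f : ℝ × ℝ × ℝ → ℝ) (p : ℝ × ℝ × ℝ) : ℝ :=
  deriv (fun s => f (p.1, p.2.1, s)) p.2.2

/-- Left-invariant `X = ∂ₓ - (y/2)∂_t`. -/
def Xop (f : ℝ × ℝ × ℝ → ℝ) (p : ℝ × ℝ × ℝ) : ℝ :=
  pdx f p - p.2.1 / 2 * pdt f p

/-- Left-invariant `Y = ∂_y + (x/2)∂_t`. -/
def Yop (f : ℝ × ℝ × ℝ → ℝ) (p : ℝ × ℝ × ℝ) : ℝ :=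
  pdy f p + p.1 / 2 * pdt f p

/-- Folland's fundamental solution (up to a constant): `G(x,y,t) = ((x²+y²)² + 16t²)^{-1/2}`. -/
def G (p : ℝ × ℝ × ℝ) : ℝ :=
  ((p.1 ^ 2 + p.2.1 ^ 2) ^ 2 + 16 * p.2.2 ^ 2) ^ (-(1 : ℝ) / 2)

/-!
Write `G = N ^ (-1/2)` with `N = |z|⁴ + 16 t²`. Since `X` and `Y` are derivations,
`Δ♭ (N ^ r) = r (r - 1) N ^ (r - 2) ((XN)² + (YN)²) + r N ^ (r - 1) Δ♭N`,
and a direct computation gives `(XN)² + (YN)² = 16 |z|² N` and `Δ♭N = 24 |z|²`.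
Hence `Δ♭ (N ^ r) = 8 r (2r + 1) |z|² N ^ (r - 1)` away from the origin,
which vanishes exactly for `r = -1/2`.
-/

open Filter Topology

section FieldDeriv

variable {E : Type*} [NormedAddCommGroup E] [NormedSpace ℝ E]
  {V : E → E} {f g : E → ℝ} {p : E}

def fieldDeriv (V : E → E) (f : E → ℝ) (p : E) : ℝ :=
  fderiv ℝ f p (V p)

theorem fieldDeriv_congr (h : f =ᶠ[𝓝 p] g) : fieldDeriv V f p = fieldDeriv V g p := by
  rw [fieldDeriv, h.fderiv_eq, fieldDeriv]

theorem fieldDeriv_mul (hf : DifferentiableAt ℝ f p) (hg : DifferentiableAt ℝ g p) :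
    fieldDeriv V (fun q => f q * g q) p = fieldDeriv V f p * g p + f p * fieldDeriv V g p := by
  simp only [fieldDeriv, fderiv_fun_mul hf hg, add_apply, smul_apply, smul_eq_mul]
  ring

theorem fieldDeriv_rpow_const (r : ℝ) (hf : DifferentiableAt ℝ f p) (hp : f p ≠ 0) :
    fieldDeriv V (fun q => f q ^ r) p = r * f p ^ (r - 1) * fieldDeriv V f p := by
  simp only [fieldDeriv, (hf.hasFDerivAt.rpow_const (Or.inl hp)).fderiv, smul_apply, smul_eq_mul]

theorem fieldDeriv_rpow_const_eventuallyEq (r : ℝ) (hf : Differentiable ℝ f) (hp : f p ≠ 0) :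
    fieldDeriv V (fun q => f q ^ r) =ᶠ[𝓝 p] fun q => r * f q ^ (r - 1) * fieldDeriv V f q := by
  filter_upwards [(hf p).continuousAt.eventually_ne hp] with q hq
  exact fieldDeriv_rpow_const r (hf q) hq

theorem differentiableAt_fieldDeriv_rpow_const (r : ℝ) (hf : Differentiable ℝ f) (hp : f p ≠ 0)
    (hVf : DifferentiableAt ℝ (fieldDeriv V f) p) :
    DifferentiableAt ℝ (fieldDeriv V (fun q => f q ^ r)) p :=
  (((hf p).rpow_const (Or.inl hp)).const_mul r |>.mul hVf).congr_of_eventuallyEq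
    (fieldDeriv_rpow_const_eventuallyEq r hf hp)

theorem fieldDeriv_fieldDeriv_rpow_const (r : ℝ) (hf : Differentiable ℝ f) (hp : f p ≠ 0)
    (hVf : DifferentiableAt ℝ (fieldDeriv V f) p) :
    fieldDeriv V (fieldDeriv V (fun q => f q ^ r)) p =
      r * ((r - 1) * f p ^ (r - 2) * fieldDeriv V f p ^ 2 +
        f p ^ (r - 1) * fieldDeriv V (fieldDeriv V f) p) := by
  rw [fieldDeriv_congr (fieldDeriv_rpow_const_eventuallyEq r hf hp),
    fieldDeriv_mul (((hf p).rpow_const (Or.inl hp)).const_mul r) hVf]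
  have hrpow : fieldDeriv V (fun q => r * f q ^ (r - 1)) p =
      r * ((r - 1) * f p ^ (r - 2) * fieldDeriv V f p) := by
    rw [fieldDeriv, fderiv_const_mul ((hf p).rpow_const (Or.inl hp)), smul_apply, smul_eq_mul]
    change r * fieldDeriv V (fun q => f q ^ (r - 1)) p = _
    rw [fieldDeriv_rpow_const _ (hf p) hp, show r - 1 - 1 = r - 2 by ring]
  rw [hrpow]
  ring

theorem eventually_differentiableAt_rpow_const (r : ℝ) (hf : Differentiable ℝ f)
    (hp : f p ≠ 0) :
    ∀ᶠ q in 𝓝 p, DifferentiableAt ℝ (fun q => f q ^ r) q := by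
  filter_upwards [(hf p).continuousAt.eventually_ne hp] with q hq
  exact (hf q).rpow_const (Or.inl hq)

theorem apply_apply_eq_fieldDeriv_fieldDeriv {D : (E → ℝ) → E → ℝ}
    (hD : ∀ f q, DifferentiableAt ℝ f q → D f q = fieldDeriv V f q)
    (hg : ∀ᶠ q in 𝓝 p, DifferentiableAt ℝ g q) (hVg : DifferentiableAt ℝ (fieldDeriv V g) p) :
    D (D g) p = fieldDeriv V (fieldDeriv V g) p := by
  have h : D g =ᶠ[𝓝 p] fieldDeriv V g := hg.mono fun q hq => hD g q hq
  rw [hD _ _ (hVg.congr_of_eventuallyEq h), fieldDeriv_congr h]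

end FieldDeriv

section Heisenberg

variable {f : ℝ × ℝ × ℝ → ℝ} {p : ℝ × ℝ × ℝ}

def Xfield (p : ℝ × ℝ × ℝ) : ℝ × ℝ × ℝ := (1, 0, -(p.2.1 / 2))

def Yfield (p : ℝ × ℝ × ℝ) : ℝ × ℝ × ℝ := (0, 1, p.1 / 2)

theorem pdx_eq_fderiv (hf : DifferentiableAt ℝ f p) : pdx f p = fderiv ℝ f p (1, 0, 0) :=
  (hf.hasFDerivAt.comp_hasDerivAt p.1
    ((hasDerivAt_id p.1).prodMk (hasDerivAt_const p.1 (p.2.1, p.2.2)))).deriv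

theorem pdy_eq_fderiv (hf : DifferentiableAt ℝ f p) : pdy f p = fderiv ℝ f p (0, 1, 0) :=
  (hf.hasFDerivAt.comp_hasDerivAt p.2.1 ((hasDerivAt_const p.2.1 p.1).prodMk
    ((hasDerivAt_id p.2.1).prodMk (hasDerivAt_const p.2.1 p.2.2)))).deriv

theorem pdt_eq_fderiv (hf : DifferentiableAt ℝ f p) : pdt f p = fderiv ℝ f p (0, 0, 1) :=
  (hf.hasFDerivAt.comp_hasDerivAt p.2.2 ((hasDerivAt_const p.2.2 p.1).prodMk
    ((hasDerivAt_const p.2.2 p.2.1).prodMk (hasDerivAt_id p.2.2)))).deriv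

theorem Xop_eq_fieldDeriv (hf : DifferentiableAt ℝ f p) : Xop f p = fieldDeriv Xfield f p := by
  have hX : Xfield p = ((1 : ℝ), (0 : ℝ), (0 : ℝ)) - (p.2.1 / 2) • ((0 : ℝ), (0 : ℝ), (1 : ℝ)) := by
    simp [Xfield]
  rw [Xop, pdx_eq_fderiv hf, pdt_eq_fderiv hf, fieldDeriv, hX, map_sub, map_smul, smul_eq_mul]

theorem Yop_eq_fieldDeriv (hf : DifferentiableAt ℝ f p) : Yop f p = fieldDeriv Yfield f p := by
  have hY : Yfield p = ((0 : ℝ), (1 : ℝ), (0 : ℝ)) + (p.1 / 2) • ((0 : ℝ), (0 : ℝ), (1 : ℝ)) := by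
    simp [Yfield]
  rw [Yop, pdy_eq_fderiv hf, pdt_eq_fderiv hf, fieldDeriv, hY, map_add, map_smul, smul_eq_mul]

/-- The fourth power of the Korányi gauge, `|z|⁴ + 16 t²`; thus `G = gauge4 ^ (-1/2)`. -/
def gauge4 (p : ℝ × ℝ × ℝ) : ℝ := (p.1 ^ 2 + p.2.1 ^ 2) ^ 2 + 16 * p.2.2 ^ 2

theorem differentiable_gauge4 : Differentiable ℝ gauge4 := by
  unfold gauge4
  fun_prop

theorem gauge4_ne_zero (hp : p ≠ 0) : gauge4 p ≠ 0 := by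
  obtain ⟨x, y, t⟩ := p
  intro h
  have hzt : (x ^ 2 + y ^ 2) ^ 2 = 0 ∧ 16 * t ^ 2 = 0 :=
    (add_eq_zero_iff_of_nonneg (by positivity) (by positivity)).1 h
  have hxy : x ^ 2 = 0 ∧ y ^ 2 = 0 :=
    (add_eq_zero_iff_of_nonneg (sq_nonneg x) (sq_nonneg y)).1
      ((pow_eq_zero_iff two_ne_zero).1 hzt.1)
  simp_all

theorem fieldDeriv_Xfield_gauge4 :
    fieldDeriv Xfield gauge4 = fun q => 4 * q.1 * (q.1 ^ 2 + q.2.1 ^ 2) - 16 * q.2.1 * q.2.2 := by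
  funext q
  rw [← Xop_eq_fieldDeriv (differentiable_gauge4 q)]
  simp only [Xop, pdx, pdt, gauge4]
  simp (disch := fun_prop)
  ring

theorem fieldDeriv_Yfield_gauge4 :
    fieldDeriv Yfield gauge4 = fun q => 4 * q.2.1 * (q.1 ^ 2 + q.2.1 ^ 2) + 16 * q.1 * q.2.2 := by
  funext q
  rw [← Yop_eq_fieldDeriv (differentiable_gauge4 q)]
  simp only [Yop, pdy, pdt, gauge4]
  simp (disch := fun_prop)
  ring

theorem fieldDeriv_Xfield_fieldDeriv_Xfield_gauge4 :
    fieldDeriv Xfield (fieldDeriv Xfield gauge4) p = 12 * (p.1 ^ 2 + p.2.1 ^ 2) := by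
  rw [fieldDeriv_Xfield_gauge4, ← Xop_eq_fieldDeriv (by fun_prop)]
  simp only [Xop, pdx, pdt]
  simp (disch := fun_prop)
  ring

theorem fieldDeriv_Yfield_fieldDeriv_Yfield_gauge4 :
    fieldDeriv Yfield (fieldDeriv Yfield gauge4) p = 12 * (p.1 ^ 2 + p.2.1 ^ 2) := by
  rw [fieldDeriv_Yfield_gauge4, ← Yop_eq_fieldDeriv (by fun_prop)]
  simp only [Yop, pdy, pdt]
  simp (disch := fun_prop)
  ring

theorem Xop_Xop_add_Yop_Yop_gauge4_rpow (r : ℝ) (hp : p ≠ 0) :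
    Xop (Xop fun q => gauge4 q ^ r) p + Yop (Yop fun q => gauge4 q ^ r) p =
      8 * r * (2 * r + 1) * (p.1 ^ 2 + p.2.1 ^ 2) * gauge4 p ^ (r - 1) := by
  have hN := gauge4_ne_zero hp
  have hXN : DifferentiableAt ℝ (fieldDeriv Xfield gauge4) p := by
    rw [fieldDeriv_Xfield_gauge4]; fun_prop
  have hYN : DifferentiableAt ℝ (fieldDeriv Yfield gauge4) p := by
    rw [fieldDeriv_Yfield_gauge4]; fun_prop
  have hev := eventually_differentiableAt_rpow_const r differentiable_gauge4 hN
  rw [apply_apply_eq_fieldDeriv_fieldDeriv (fun _ _ => Xop_eq_fieldDeriv) hev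
      (differentiableAt_fieldDeriv_rpow_const r differentiable_gauge4 hN hXN),
    apply_apply_eq_fieldDeriv_fieldDeriv (fun _ _ => Yop_eq_fieldDeriv) hev
      (differentiableAt_fieldDeriv_rpow_const r differentiable_gauge4 hN hYN),
    fieldDeriv_fieldDeriv_rpow_const r differentiable_gauge4 hN hXN,
    fieldDeriv_fieldDeriv_rpow_const r differentiable_gauge4 hN hYN,
    fieldDeriv_Xfield_fieldDeriv_Xfield_gauge4, fieldDeriv_Yfield_fieldDeriv_Yfield_gauge4,
    fieldDeriv_Xfield_gauge4, fieldDeriv_Yfield_gauge4,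
    show r - 1 = r - 2 + 1 by ring, Real.rpow_add_one hN]
  unfold gauge4
  ring

end Heisenberg

/-- `G` is `Δ♭`-harmonic away from the origin: `Δ♭ G = X²G + Y²G = 0` on `ℝ³ \ {0}`. -/
theorem kohn_laplacian_G_eq_zero (p : ℝ × ℝ × ℝ) (hp : p ≠ 0) :
    Xop (fun q => Xop G q) p + Yop (fun q => Yop G q) p = 0 := by
  have h := Xop_Xop_add_Yop_Yop_gauge4_rpow (-(1 : ℝ) / 2) hp
  rwa [show 2 * (-(1 : ℝ) / 2) + 1 = 0 by norm_num, mul_zero, zero_mul, zero_mul] at h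
end
end

section
/- Let B be a Banach space, V a normed space, and {T_s}_{s∈[0,1]} a family of bounded linear operators B → V such that: (a) there is c > 0 with ‖T_s f‖_V ≥ c‖f‖_B for all f ∈ B and s ∈ [0,1]; (b) s ↦ T_s is continuous from [0,1] to the operator norm topology on B(B,V); (c) T_0 is surjective. Then T_1 is surjective. -/
/-!
Lower bound `c` makes a surjective `S` invertible with `‖S⁻¹‖ ≤ c⁻¹`, so any `T` with
`‖T - S‖ < c` approximates `S` within a constant below `‖S⁻¹‖⁻¹`; the contraction argument
behind the inverse function theorem then makes `T` surjective. Applied in both directions, this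
shows that surjectivity of `T s` is locally constant in `s` on the connected interval `[0, 1]`.
-/

open Set Topology

namespace ContinuousLinearMap

variable {𝕜 E F : Type*} [NontriviallyNormedField 𝕜]
  [NormedAddCommGroup E] [NormedSpace 𝕜 E] [NormedAddCommGroup F] [NormedSpace 𝕜 F]

theorem exists_equiv_norm_symm_le_of_surjective {S : E →L[𝕜] F} {c : ℝ} (hc : 0 < c)
    (hS : ∀ x, c * ‖x‖ ≤ ‖S x‖) (hsurj : Function.Surjective S) :
    ∃ e : E ≃L[𝕜] F, (e : E →L[𝕜] F) = S ∧ ‖(e.symm : F →L[𝕜] E)‖ ≤ c⁻¹ := by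
  have hinj : Function.Injective S := fun x y hxy => by
    have := hS (x - y)
    rw [map_sub, hxy, sub_self, norm_zero] at this
    exact sub_eq_zero.1 (norm_le_zero_iff.1 (nonpos_of_mul_nonpos_right this hc))
  let e : E ≃ₗ[𝕜] F := .ofBijective S.toLinearMap ⟨hinj, hsurj⟩
  have hsymm : ∀ y, ‖e.symm y‖ ≤ c⁻¹ * ‖y‖ := fun y => by
    rw [le_inv_mul_iff₀ hc]
    calc c * ‖e.symm y‖ ≤ ‖S (e.symm y)‖ := hS _
      _ = ‖y‖ := congrArg norm (e.apply_symm_apply y)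
  exact ⟨e.toContinuousLinearEquivOfBounds ‖S‖ c⁻¹ S.le_opNorm hsymm, rfl,
    opNorm_le_bound _ (inv_nonneg.2 hc.le) hsymm⟩

theorem surjective_of_norm_sub_lt [CompleteSpace E] {S T : E →L[𝕜] F} {c : ℝ}
    (hS : ∀ x, c * ‖x‖ ≤ ‖S x‖) (hsurj : Function.Surjective S) (hST : ‖T - S‖ < c) :
    Function.Surjective T := by
  have hc : 0 < c := (norm_nonneg _).trans_lt hST
  obtain ⟨e, rfl, he⟩ := exists_equiv_norm_symm_le_of_surjective hc hS hsurj
  have happrox : ApproximatesLinearOn T (e : E →L[𝕜] F) univ ‖T - e‖₊ := fun x _ y _ => by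
    simpa [map_sub, sub_sub_sub_comm] using (T - e).le_opNorm (x - y)
  refine happrox.surjective (e.subsingleton_or_nnnorm_symm_pos.imp_right fun hpos => ?_)
  rw [← NNReal.coe_lt_coe, NNReal.coe_inv, coe_nnnorm, coe_nnnorm]
  exact hST.trans_le ((le_inv_comm₀ hc hpos).2 he)

theorem surjective_iff_of_norm_sub_lt [CompleteSpace E] {S T : E →L[𝕜] F} {c : ℝ}
    (hS : ∀ x, c * ‖x‖ ≤ ‖S x‖) (hT : ∀ x, c * ‖x‖ ≤ ‖T x‖) (hST : ‖T - S‖ < c) :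
    Function.Surjective S ↔ Function.Surjective T :=
  ⟨fun h => surjective_of_norm_sub_lt hS h hST,
    fun h => surjective_of_norm_sub_lt hT h (by rwa [norm_sub_rev])⟩

end ContinuousLinearMap

/-- The method of continuity: if `{T_s}` is an operator-norm continuous family of bounded
operators from a Banach space `B` to a normed space `V`, uniformly bounded from below,
and `T_0` is surjective, then `T_1` is surjective. -/
theorem method_of_continuity {B V : Type*}
    [NormedAddCommGroup B] [NormedSpace ℝ B] [CompleteSpace B]
    [NormedAddCommGroup V] [NormedSpace ℝ V]
    (T : ℝ → B →L[ℝ] V)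
    (c : ℝ) (hc : 0 < c)
    (hlow : ∀ s ∈ Icc (0 : ℝ) 1, ∀ f : B, c * ‖f‖ ≤ ‖T s f‖)
    (hcont : ContinuousOn T (Icc (0 : ℝ) 1))
    (hsurj : Function.Surjective (T 0)) :
    Function.Surjective (T 1) := by
  have hlocal : ∀ s ∈ Icc (0 : ℝ) 1, ∀ᶠ t in 𝓝[Icc 0 1] s,
      (Function.Surjective (T s) ↔ Function.Surjective (T t)) := fun s hs => by
    filter_upwards [self_mem_nhdsWithin,
      (hcont s hs).eventually (Metric.ball_mem_nhds (T s) hc)] with t ht hts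
    exact ContinuousLinearMap.surjective_iff_of_norm_sub_lt (hlow s hs) (hlow t ht)
      (by rwa [← dist_eq_norm])
  exact (isPreconnected_Icc.induction₂ _ hlocal (fun _ _ _ _ _ _ => Iff.trans)
    (fun _ _ _ _ => Iff.symm) (left_mem_Icc.2 zero_le_one) (right_mem_Icc.2 zero_le_one)).1 hsurj
end
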